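/- Let Δ → A be a surjective group homomorphism with kernel Z contained in the center of Δ, where A is simple non-abelian and Δ is perfect. Let b̃ ∈ Δ with nontrivial image in A. Then the smallest normal subgroup N of Δ containing all commutators [b̃, y] for y ∈ Δ equals Δ. -/

import Mathlib

open scoped commutatorElement


private lemma aux_mul_central_left {G : Type*} [Group G] (a b z : G)
    (hz : ∀ g : G, g * z = z * g) : ⁅a * z, b⁆ = ⁅a, b⁆ := by
  rw [commutatorElement_def, commutatorElement_def, mul_inv_rev, mul_assoc a z b, ← hz b]
  group

private lemma aux_mul_central_right {G : Type*} [Group G] (a b z : G)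
    (hz : ∀ g : G, g * z = z * g) : ⁅a, b * z⁆ = ⁅a, b⁆ := by
  rw [commutatorElement_def, commutatorElement_def, mul_inv_rev,
    mul_assoc a (b * z) a⁻¹, mul_assoc b z a⁻¹, ← hz a⁻¹]
  group

/-- Let `p : Δ →* A` be surjective with central kernel, `A` simple non-abelian,
`Δ` perfect, and `b̃ ∈ Δ` with nontrivial image in `A`. Then the smallest normal
subgroup of `Δ` containing all commutators `[b̃, y]`, `y ∈ Δ`, is all of `Δ`. -/
theorem stmt_7 (Δ A : Type*) [Group Δ] [Group A]
    (p : Δ →* A) (hsurj : Function.Surjective p)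
    (hcentral : p.ker ≤ Subgroup.center Δ)
    [IsSimpleGroup A] (hnonab : ∃ a b : A, a * b ≠ b * a)
    (hperfect : commutator Δ = ⊤)
    (btil : Δ) (hb : p btil ≠ 1) :
    Subgroup.normalClosure (Set.range fun y : Δ => btil * y * btil⁻¹ * y⁻¹) = ⊤ := by
  set N := Subgroup.normalClosure (Set.range fun y : Δ => btil * y * btil⁻¹ * y⁻¹) with hN
  have hNnormal : N.Normal := Subgroup.normalClosure_normal
  -- center of A is trivial
  have hcenter : Subgroup.center A = ⊥ := by
    rcases IsSimpleGroup.eq_bot_or_eq_top_of_normal (Subgroup.center A)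
      inferInstance with h | h
    · exact h
    · obtain ⟨a, b, hab⟩ := hnonab
      exact absurd ((Subgroup.mem_center_iff.mp (h ▸ Subgroup.mem_top a) b)) (by
        intro h'; exact hab h'.symm)
  -- image of N is all of A
  have hmap : N.map p = ⊤ := by
    have hnorm : (N.map p).Normal := Subgroup.Normal.map hNnormal p hsurj
    rcases IsSimpleGroup.eq_bot_or_eq_top_of_normal (N.map p) hnorm with h | h
    · exfalso
      apply hb
      rw [← Subgroup.mem_bot, ← hcenter]
      rw [Subgroup.mem_center_iff]
      intro g
      obtain ⟨y, hy⟩ := hsurj g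
      have hmem : p (btil * y * btil⁻¹ * y⁻¹) ∈ N.map p :=
        ⟨_, Subgroup.subset_normalClosure ⟨y, rfl⟩, rfl⟩
      rw [h, Subgroup.mem_bot] at hmem
      simp only [map_mul, map_inv, hy] at hmem
      rw [mul_inv_eq_one, mul_inv_eq_iff_eq_mul] at hmem
      exact hmem.symm
    · exact h
  -- every x is n * z with n ∈ N, z central
  have hdecomp : ∀ x : Δ, ∃ n ∈ N, ∃ z ∈ Subgroup.center Δ, x = n * z := by
    intro x
    have : p x ∈ N.map p := hmap ▸ Subgroup.mem_top _
    obtain ⟨n, hn, hpn⟩ := this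
    refine ⟨n, hn, n⁻¹ * x, hcentral ?_, by group⟩
    rw [MonoidHom.mem_ker, map_mul, map_inv, hpn]
    group
  -- commutator ≤ N
  have hcomm : commutator Δ ≤ N := by
    rw [commutator_def, Subgroup.commutator_le]
    intro x _ y _
    obtain ⟨n₁, hn₁, z₁, hz₁, rfl⟩ := hdecomp x
    obtain ⟨n₂, hn₂, z₂, hz₂, rfl⟩ := hdecomp y
    have e : ⁅n₁ * z₁, n₂ * z₂⁆ = ⁅n₁, n₂⁆ := by
      rw [aux_mul_central_left _ _ _ (Subgroup.mem_center_iff.mp hz₁),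
        aux_mul_central_right _ _ _ (Subgroup.mem_center_iff.mp hz₂)]
    rw [e]
    exact N.mul_mem (N.mul_mem (N.mul_mem hn₁ hn₂) (N.inv_mem hn₁)) (N.inv_mem hn₂)
  rw [← top_le_iff, ← hperfect]
  exact hcomm
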